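/- arXiv:1907.06739 — 7 statements merged into one kernel-verified Lean document; each statement's English description precedes it below -/
import Mathlib

section
/- Let e, r, a, b be integers with r > 0. If the quantity χ = (1 + 2ab + 2r(a+b) - a²e - aer + r²)/(2r) is an integer, then 2ab ≡ a²e + aer - r² - 1 (mod 2r), the integers r and a are coprime, and if e is even then r is odd. -/
/-- Integrality of the Euler characteristic of a potentially exceptional character
on the Hirzebruch surface `F_e` forces the stated congruence and coprimality. -/
theorem exceptional_char_congruence (e r a b : ℤ) (hr : 0 < r)
    (hχ : (2*r) ∣ (1 + 2*a*b + 2*r*(a+b) - a^2*e - a*e*r + r^2)) :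
    2*a*b ≡ a^2*e + a*e*r - r^2 - 1 [ZMOD 2*r] ∧
    IsCoprime r a ∧ (Even e → Odd r) := by
  obtain ⟨k, hk⟩ := hχ
  refine ⟨?_, ?_, ?_⟩
  · exact Int.modEq_iff_dvd.mpr ⟨(a+b) - k, by linear_combination -hk⟩
  · exact ⟨2*k - 2*a - 2*b + a*e - r, a*e - 2*b, by linear_combination -hk⟩
  · rintro ⟨m, hm⟩
    rcases Int.even_or_odd r with ⟨s, hs⟩ | h
    · exfalso
      have h2 : (2:ℤ) ∣ 1 :=
        ⟨2*s*k - a*b - 2*s*(a+b) + a^2*m + 2*a*m*s - 2*s^2, by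
          subst hm hs; linear_combination hk⟩
      norm_num at h2
    · exact h
end

section
/- Let M ≥ 3 be an integer and ψ_M = (M + √(M² - 4))/2. If c, d are positive real numbers with 1/ψ_M < d/c < ψ_M, then Mc - d > 0 and 1/ψ_M < c/(Mc - d) < ψ_M. -/
/-- The transformation `(d, c) ↦ (c, Mc - d)` preserves the interval
`(ψ_M⁻¹, ψ_M)` of ratios. -/
theorem kronecker_transformation_preserves_interval (M : ℤ) (hM : 3 ≤ M)
    (ψ : ℝ) (hψ : ψ = ((M:ℝ) + Real.sqrt ((M:ℝ)^2 - 4))/2)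
    (c d : ℝ) (hc : 0 < c) (hd : 0 < d)
    (h1 : 1/ψ < d/c) (h2 : d/c < ψ) :
    0 < M*c - d ∧ 1/ψ < c/(M*c - d) ∧ c/(M*c - d) < ψ := by
  have hM' : (3:ℝ) ≤ (M:ℝ) := by exact_mod_cast hM
  have hs0 : (0:ℝ) ≤ (M:ℝ)^2 - 4 := by nlinarith
  have hs : Real.sqrt ((M:ℝ)^2 - 4) ^ 2 = (M:ℝ)^2 - 4 := Real.sq_sqrt hs0
  have hsnn : 0 ≤ Real.sqrt ((M:ℝ)^2 - 4) := Real.sqrt_nonneg _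
  have hψpos : 0 < ψ := by rw [hψ]; nlinarith
  have hψ2 : ψ^2 = M*ψ - 1 := by rw [hψ]; nlinarith [hs]
  have hψM : ψ < M := by nlinarith
  have h1' : c < ψ * d := by
    rw [div_lt_div_iff₀ hψpos hc] at h1; nlinarith
  have h2' : d < ψ * c := by
    rw [div_lt_iff₀ hc] at h2; nlinarith
  have hpos : 0 < (M:ℝ)*c - d := by nlinarith
  refine ⟨hpos, ?_, ?_⟩
  · rw [div_lt_div_iff₀ hψpos hpos]
    nlinarith [mul_lt_mul_of_pos_left h1' (sub_pos.mpr hψM)]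
  · rw [div_lt_iff₀ hpos]
    nlinarith [mul_lt_mul_of_pos_left h2' hψpos]
end

section
/- Let e ∈ {0, 1} and define P(x, y) = (x+1)(y + 1 - ex/2) for real x, y. If -8 ≤ (2-e)x + 2y ≤ 0, then P(x, y) ≤ 1, with equality if and only if (x, y) = (0, 0) or (x, y) = (-2, -(e+2)). -/
/-- On a del Pezzo Hirzebruch surface (`e = 0` or `1`), on the strip
`0 ≥ (-K)·ν ≥ -K²`, the Riemann-Roch polynomial satisfies `P(ν) ≤ 1`,
with equality only at `ν = 0` or `ν = K`. -/
theorem riemannRoch_le_one_on_strip (e : ℝ) (he : e = 0 ∨ e = 1) (x y : ℝ)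
    (h1 : -8 ≤ (2-e)*x + 2*y) (h2 : (2-e)*x + 2*y ≤ 0) :
    (x+1)*(y+1-e*x/2) ≤ 1 ∧
    ((x+1)*(y+1-e*x/2) = 1 ↔ (x = 0 ∧ y = 0) ∨ (x = -2 ∧ y = -(e+2))) := by
  rcases he with he | he <;> subst he
  · -- e = 0
    simp only [zero_mul] at *
    constructor
    · nlinarith [sq_nonneg (x - y), mul_nonneg (by linarith : (0:ℝ) ≤ -((x+y))) (by linarith : (0:ℝ) ≤ x+y+4)]
    · constructor
      · intro heq
        have h3 : (x - y)^2 = (x+y)*(x+y+4) := by nlinarith [heq]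
        have h4 : (x+y)*(x+y+4) ≤ 0 := by nlinarith
        have h5 : (x - y)^2 = 0 := le_antisymm (by linarith) (sq_nonneg _)
        have hxy : x = y := by nlinarith [h5]
        have h6 : (x+y)*(x+y+4) = 0 := by linarith [h3]
        rcases mul_eq_zero.1 h6 with h | h
        · left; constructor <;> linarith
        · right; norm_num; constructor <;> linarith
      · rintro (⟨hx, hy⟩ | ⟨hx, hy⟩) <;> subst hx <;> subst hy <;> norm_num
  · -- e = 1
    constructor
    · nlinarith [sq_nonneg (3*x/2 - y), mul_nonneg (by linarith : (0:ℝ) ≤ -((x+2*y))) (by linarith : (0:ℝ) ≤ x+2*y+8)]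
    · constructor
      · intro heq
        have h3 : (3*x/2 - y)^2 = (x+2*y)*(x+2*y+8)/4 := by nlinarith [heq]
        have h4 : (x+2*y)*(x+2*y+8) ≤ 0 := by nlinarith
        have h5 : (3*x/2 - y)^2 = 0 := le_antisymm (by linarith) (sq_nonneg _)
        have hxy : 3*x/2 = y := by nlinarith [h5]
        have h6 : (x+2*y)*(x+2*y+8) = 0 := by linarith [h3]
        rcases mul_eq_zero.1 h6 with h | h
        · left; constructor <;> linarith
        · right; norm_num; constructor <;> linarith
      · rintro (⟨hx, hy⟩ | ⟨hx, hy⟩) <;> subst hx <;> subst hy <;> norm_num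
end

section
/- Let e ≥ 0 and m > 0 be real numbers, and let a, b be real numbers satisfying (a+1)(b + 1 - ea/2) ≥ 0 and -1 ≤ am + b ≤ 0. Then -1 ≤ a ≤ 2/(e + 2m). -/
/-- Bound on the fiber degree of slope differences of consecutive
Harder-Narasimhan factors on `F_e`. -/
theorem HN_fiber_degree_bound (e m a b : ℝ) (he : 0 ≤ e) (hm : 0 < m)
    (hP : 0 ≤ (a+1)*(b+1-e*a/2)) (h1 : -1 ≤ a*m + b) (h2 : a*m + b ≤ 0) :
    -1 ≤ a ∧ a ≤ 2/(e+2*m) := by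
  have hd : 0 < e + 2*m := by linarith
  constructor
  · by_contra h
    push_neg at h
    have hb : b + 1 - e*a/2 ≤ 0 := by
      by_contra hb
      push_neg at hb
      nlinarith [mul_pos (show (0:ℝ) < -(a+1) by linarith) hb]
    nlinarith [mul_pos (show (0:ℝ) < m + e/2 by linarith) (show (0:ℝ) < -a by linarith)]
  · rw [le_div_iff₀ hd]
    nlinarith [sq_nonneg (a+1), sq_nonneg a]
end

section
/- Let e ∈ {0, 1} and define P(x, y) = (x+1)(y + 1 - ex/2). For every (ε, φ) ∈ [0,1] × [0,1], there exists L ∈ {(0,0), (1,0), (0,1), (1,1)} such that min{P(ε - L₁, φ - L₂), P(L₁ - ε, L₂ - φ)} ≥ 3/8. -/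
/-- On the del Pezzo Hirzebruch surface `F_e` (`e = 0` or `1`), one of the four
line bundles `O, O(E), O(F), O(E+F)` gives the bound `DLP¹(ν) ≥ 3/8` on the
unit square of slopes. -/
theorem DLP1_ge_three_eighths (e : ℝ) (he : e = 0 ∨ e = 1) (ε φ : ℝ)
    (hε : ε ∈ Set.Icc (0:ℝ) 1) (hφ : φ ∈ Set.Icc (0:ℝ) 1) :
    ∃ L ∈ ({(0,0), (1,0), (0,1), (1,1)} : Set (ℝ × ℝ)),
      3/8 ≤ min ((ε - L.1 + 1)*(φ - L.2 + 1 - e*(ε - L.1)/2))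
               ((L.1 - ε + 1)*(L.2 - φ + 1 - e*(L.1 - ε)/2)) := by
  obtain ⟨hε0, hε1⟩ := hε
  obtain ⟨hφ0, hφ1⟩ := hφ
  rcases he with rfl | rfl
  · -- e = 0
    rcases le_total ε (1/2) with h | h
    · rcases le_total φ ((1 - ε)/2) with h2 | h2
      · refine ⟨(0,0), by simp, le_min ?_ ?_⟩ <;> simp only <;> nlinarith
      · refine ⟨(0,1), by simp, le_min ?_ ?_⟩ <;> simp only <;> nlinarith
    · rcases le_total φ (1 - ε/2) with h2 | h2
      · refine ⟨(1,0), by simp, le_min ?_ ?_⟩ <;> simp only <;> nlinarith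
      · refine ⟨(1,1), by simp, le_min ?_ ?_⟩ <;> simp only <;> nlinarith
  · -- e = 1
    rcases le_total ε (1/2) with h | h
    · rcases le_total φ (1/2) with h2 | h2
      · refine ⟨(0,0), by simp, le_min ?_ ?_⟩ <;> simp only <;> nlinarith
      · refine ⟨(0,1), by simp, le_min ?_ ?_⟩ <;> simp only <;> nlinarith
    · rcases le_total φ (1/2) with h2 | h2
      · refine ⟨(1,0), by simp, le_min ?_ ?_⟩ <;> simp only <;> nlinarith
      · refine ⟨(1,1), by simp, le_min ?_ ?_⟩ <;> simp only <;> nlinarith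
end

section
/- Let e ∈ {0, 1} and let ℓ ≥ 3 be an integer. Set N = 2ℓ - e - 2 and M = 2ℓ + 2 - e, and let ψ_X = (X + √(X² - 4))/2 for X ∈ {N, M}. Then (ℓ + 1 - e/2)/(ψ_M - 1) - (1 - (ℓ - 2 - e/2)/ψ_N)/(1 + 1/ψ_N) > 0. -/
/-- Positivity of the anticanonical slope difference at the extreme Kronecker
parameter values on `F_e` (`e = 0` or `1`), for `ℓ ≥ 3`. -/
theorem kronecker_slope_crossing_positive (e : ℝ) (he : e = 0 ∨ e = 1)
    (ℓ : ℤ) (hℓ : 3 ≤ ℓ)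
    (N M ψN ψM : ℝ)
    (hN : N = 2*(ℓ:ℝ) - e - 2) (hM : M = 2*(ℓ:ℝ) + 2 - e)
    (hψN : ψN = (N + Real.sqrt (N^2 - 4))/2)
    (hψM : ψM = (M + Real.sqrt (M^2 - 4))/2) :
    0 < ((ℓ:ℝ) + 1 - e/2)/(ψM - 1) - (1 - ((ℓ:ℝ) - 2 - e/2)/ψN)/(1 + 1/ψN) := by
  have hℓ' : (3:ℝ) ≤ (ℓ:ℝ) := by exact_mod_cast hℓ
  have he1 : 0 ≤ e ∧ e ≤ 1 := by rcases he with h | h <;> simp [h]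
  have hN3 : (3:ℝ) ≤ N := by linarith [he1.1, he1.2]
  have hMN : M = N + 4 := by linarith
  subst hMN
  set s := Real.sqrt (N^2 - 4) with hsdef
  set t := Real.sqrt ((N+4)^2 - 4) with htdef
  have hs2 : s^2 = N^2 - 4 := Real.sq_sqrt (by nlinarith)
  have ht2 : t^2 = (N+4)^2 - 4 := Real.sq_sqrt (by nlinarith)
  have hs0 : 0 ≤ s := Real.sqrt_nonneg _
  have ht0 : 0 ≤ t := Real.sqrt_nonneg _
  have hsN : s < N := by nlinarith
  have htM : t < N + 4 := by nlinarith
  -- positivity of denominators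
  have hψNpos : 0 < ψN := by rw [hψN]; linarith
  have hψNne : ψN ≠ 0 := ne_of_gt hψNpos
  have hψM1 : 0 < ψM - 1 := by rw [hψM]; linarith
  have hd2 : 0 < 1 + 1/ψN := by positivity
  -- rewrite the two terms
  have key : ((ℓ:ℝ) + 1 - e/2)/(ψM - 1) - (1 - ((ℓ:ℝ) - 2 - e/2)/ψN)/(1 + 1/ψN)
      = ((N+4)/2)/(ψM - 1) - (ψN - (N-2)/2)/(ψN + 1) := by
    have h1 : ((ℓ:ℝ) + 1 - e/2) = (N+4)/2 := by linarith
    have h2 : ((ℓ:ℝ) - 2 - e/2) = (N-2)/2 := by linarith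
    rw [h1, h2]
    have h3 : (1 - (N-2)/2/ψN)/(1 + 1/ψN) = (ψN - (N-2)/2)/(ψN + 1) := by
      rw [div_eq_div_iff (by positivity) (by linarith)]
      field_simp
    rw [h3]
  rw [key, hψN, hψM]
  have e1 : ((N + 4 + t)/2 - 1) = (N + 4 + t - 2)/2 := by ring
  have e2 : ((N + s)/2 - (N-2)/2) = (s + 2)/2 := by ring
  have e3 : ((N + s)/2 + 1) = (N + s + 2)/2 := by ring
  rw [e1, e2, e3]
  have hdt : (0:ℝ) < (N + 4 + t - 2)/2 := by linarith
  have hds : (0:ℝ) < (N + s + 2)/2 := by linarith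
  rw [sub_pos, div_lt_div_iff₀ hds hdt]
  -- key algebraic inequality
  have hP : 0 < (N+2)^2 + 2*s := by nlinarith
  have hid : ((N+2)^2 + 2*s)^2 - (t*(s+2))^2 = 16*(N+2)*(N-s) := by
    linear_combination (4 - ((N+4)^2 - 4)) * hs2 - (s+2)^2 * ht2
  have hR : 0 < 16*(N+2)*(N-s) := by
    have h1 : (0:ℝ) < N - s := by linarith
    positivity
  have hsq : (t*(s+2))^2 < ((N+2)^2 + 2*s)^2 := by linarith [hid, hR]
  have hlt : t*(s+2) < (N+2)^2 + 2*s :=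
    lt_of_pow_lt_pow_left₀ 2 hP.le hsq
  have key2 : (N+4)/2 * ((N+s+2)/2) - (s+2)/2 * ((N + 4 + t - 2)/2)
      = (((N+2)^2 + 2*s) - t*(s+2))/4 := by ring
  linarith [hlt, key2]
end

section
/- Let 𝒜 be an abelian category and let 0 → A → E → B → 0 be a short exact sequence in 𝒜, where A is a finite direct sum of simple objects, B is simple, and Hom(E, A) = 0. Then every proper subobject of E is a subobject of A, i.e., factors through the monomorphism A → E. -/
open CategoryTheory CategoryTheory.Limits

section Aux

variable {C : Type*} [Category C] [Abelian C]

/-- Every epimorphism out of `A` splits. -/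
def CoSplit (A : C) : Prop :=
  ∀ ⦃Q : C⦄ (q : A ⟶ Q), Epi q → ∃ s : Q ⟶ A, s ≫ q = 𝟙 Q

lemma coSplit_of_isZero {A : C} (h : IsZero A) : CoSplit A := by
  intro Q q hq
  have hq0 : q = 0 := h.eq_of_src q 0
  have hQ : (𝟙 Q) = 0 := by
    haveI := hq
    rw [← cancel_epi q, hq0]; simp
  exact ⟨0, by simp [hQ]⟩

lemma coSplit_of_simple {A : C} (hA : Simple A) : CoSplit A := by
  intro Q q hq
  haveI := hq
  by_cases h : q = 0
  · have hQ : (𝟙 Q) = 0 := by rw [← cancel_epi q, h]; simp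
    exact ⟨0, by simp [hQ]⟩
  · haveI := isIso_of_epi_of_nonzero h
    exact ⟨inv q, by simp⟩

lemma coSplit_of_iso {A A' : C} (e : A ≅ A') (h : CoSplit A) : CoSplit A' := by
  intro Q q hq
  haveI := hq
  obtain ⟨s, hs⟩ := h (e.hom ≫ q) inferInstance
  exact ⟨s ≫ e.hom, by simpa using hs⟩

lemma coSplit_biprod {A B : C} (hA : CoSplit A) (hB : CoSplit B) :
    CoSplit (A ⊞ B) := by
  intro Q q hq
  haveI := hq
  set qA : A ⟶ Q := biprod.inl ≫ q with hqA
  set qB : B ⟶ Q := biprod.inr ≫ q with hqB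
  set e : B ⟶ image qB := factorThruImage qB with he
  set m : image qB ⟶ Q := image.ι qB with hm
  obtain ⟨t, ht⟩ := hB e inferInstance
  set r : Q ⟶ cokernel m := cokernel.π m with hr
  have hmr : m ≫ r = 0 := cokernel.condition m
  have hem : e ≫ m = qB := image.fac qB
  have hqBr : qB ≫ r = 0 := by
    calc qB ≫ r = e ≫ m ≫ r := by rw [← Category.assoc, hem]
      _ = 0 := by rw [hmr, comp_zero]
  have hqr : q ≫ r = biprod.fst ≫ (qA ≫ r) := by
    apply biprod.hom_ext'
    · rw [← Category.assoc, ← hqA, ← Category.assoc, biprod.inl_fst, Category.id_comp]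
    · rw [← Category.assoc, ← hqB, hqBr, ← Category.assoc, biprod.inr_fst, zero_comp]
  have hu : Epi (qA ≫ r) := by
    have h1 : Epi (q ≫ r) := epi_comp _ _
    rw [hqr] at h1
    haveI := h1
    exact epi_of_epi (biprod.fst : A ⊞ B ⟶ A) (qA ≫ r)
  obtain ⟨v, hv⟩ := hA (qA ≫ r) hu
  have hx : (𝟙 Q - r ≫ (v ≫ qA)) ≫ r = 0 := by
    rw [Preadditive.sub_comp, Category.id_comp, Category.assoc, Category.assoc, hv,
      Category.comp_id, sub_self]
  set p : Q ⟶ image qB := Abelian.monoLift m _ hx with hp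
  have hpm : p ≫ m = 𝟙 Q - r ≫ (v ≫ qA) := Abelian.monoLift_comp m _ hx
  refine ⟨p ≫ (t ≫ biprod.inr) + r ≫ (v ≫ biprod.inl), ?_⟩
  have htqB : t ≫ qB = m := by
    calc t ≫ qB = t ≫ e ≫ m := by rw [hem]
      _ = m := by rw [← Category.assoc, ht, Category.id_comp]
  calc (p ≫ (t ≫ biprod.inr) + r ≫ (v ≫ biprod.inl)) ≫ q
      = p ≫ (t ≫ qB) + r ≫ (v ≫ qA) := by
        simp [Preadditive.add_comp, Category.assoc, hqA, hqB]
    _ = (𝟙 Q - r ≫ (v ≫ qA)) + r ≫ (v ≫ qA) := by rw [htqB, hpm]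
    _ = 𝟙 Q := by abel

/-- Splitting off the first summand of a finite coproduct. -/
noncomputable def sigmaSuccIso (n : ℕ) (S : Fin (n + 1) → C) :
    (∐ S) ≅ S 0 ⊞ ∐ (fun i : Fin n => S i.succ) where
  hom := Sigma.desc (fun i =>
    Fin.cases (motive := fun i => S i ⟶ S 0 ⊞ ∐ (fun i : Fin n => S i.succ))
      biprod.inl
      (fun j => Sigma.ι (fun i : Fin n => S i.succ) j ≫ biprod.inr) i)
  inv := biprod.desc (Sigma.ι S 0) (Sigma.desc fun j => Sigma.ι S j.succ)
  hom_inv_id := by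
    ext i
    induction i using Fin.cases <;> simp
  inv_hom_id := by
    ext <;> simp

lemma coSplit_sigma : ∀ (n : ℕ) (S : Fin n → C), (∀ i, Simple (S i)) → CoSplit (∐ S)
  | 0, S, _ => by
    apply coSplit_of_isZero
    rw [IsZero.iff_id_eq_zero]
    apply Sigma.hom_ext
    intro i
    exact i.elim0
  | (n + 1), S, hS => by
    refine coSplit_of_iso (sigmaSuccIso n S).symm ?_
    exact coSplit_biprod (coSplit_of_simple (hS 0))
      (coSplit_sigma n (fun i : Fin n => S i.succ) (fun i => hS i.succ))

end Aux

/-- If `0 → A → E → B → 0` is exact with `A` semisimple, `B` simple, and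
`Hom(E, A) = 0`, then every proper subobject of `E` is a subobject of `A`. -/
theorem proper_subobject_factors_through_semisimple
    {C : Type*} [Category C] [Abelian C]
    (A E B : C) (f : A ⟶ E) (g : E ⟶ B) (w : f ≫ g = 0)
    (hse : (ShortComplex.mk f g w).ShortExact)
    (n : ℕ) (S : Fin n → C) (hS : ∀ i, Simple (S i)) (hA : A ≅ ∐ S)
    (hB : Simple B)
    (hEA : ∀ φ : E ⟶ A, φ = 0) :
    ∀ (X : C) (i : X ⟶ E), Mono i → ¬ IsIso i → ∃ j : X ⟶ A, j ≫ f = i := by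
  intro X i hi hni
  haveI := hi
  haveI := hse.epi_g
  by_cases hig : i ≫ g = 0
  · obtain ⟨j, hj⟩ := KernelFork.IsLimit.lift' hse.fIsKernel i hig
    exact ⟨j, hj⟩
  · exfalso
    haveI : Epi (i ≫ g) := epi_of_nonzero_to_simple hig
    let c : E ⟶ cokernel i := cokernel.π i
    have hfc : Epi (f ≫ c) := by
      apply Preadditive.epi_of_cancel_zero
      intro Z z hz
      have hz' : f ≫ (c ≫ z) = 0 := by rw [← Category.assoc]; exact hz
      obtain ⟨y, hy⟩ := CokernelCofork.IsColimit.desc' hse.gIsCokernel (c ≫ z) hz'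
      have hy' : g ≫ y = c ≫ z := by simpa using hy
      have h0 : (i ≫ g) ≫ y = 0 := by
        rw [Category.assoc, hy', ← Category.assoc]
        rw [show i ≫ c = 0 from cokernel.condition i, zero_comp]
      have hy0 : y = 0 := by rw [← cancel_epi (i ≫ g), comp_zero]; exact h0
      have hcz : c ≫ z = 0 := by rw [← hy', hy0, comp_zero]
      rw [← cancel_epi c, comp_zero]; exact hcz
    have hcs : CoSplit A := coSplit_of_iso hA.symm (coSplit_sigma n S hS)
    obtain ⟨s, hs⟩ := hcs (f ≫ c) hfc
    have h0 : c ≫ s = 0 := hEA (c ≫ s)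
    have hc0 : c = 0 := by
      calc c = c ≫ (s ≫ (f ≫ c)) := by rw [hs, Category.comp_id]
        _ = (c ≫ s) ≫ (f ≫ c) := by simp
        _ = 0 := by rw [h0, zero_comp]
    haveI : Epi i := Abelian.epi_of_cokernel_π_eq_zero i hc0
    exact hni (isIso_of_mono_of_epi i)
end
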